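/- arXiv:2301.09020 — 4 statements merged into one kernel-verified Lean document; each statement's English description precedes it below -/
import Mathlib

section
/- The censoring product-limit estimator K̂ satisfies the anticipating Volterra integral equation: for every real t with 0 < t < τ, K̂(t) = 1 − ∑_{u ≤ t} K̂(u) · ΔC(u)/Y(u+). -/
open Finset
open scoped Classical

noncomputable section

namespace SurvStmt

/-- The finite set of distinct observed times `{X_1, …, X_n}`. -/
def times {n : ℕ} (X : Fin n → ℝ) : Finset ℝ := Finset.image X Finset.univ

/-- `Y(t) = #{i : X_i ≥ t}`, as a real number. -/
def Yat {n : ℕ} (X : Fin n → ℝ) (t : ℝ) : ℝ :=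
  ((Finset.univ.filter (fun i => t ≤ X i)).card : ℝ)

/-- `Y(t+) = #{i : X_i > t}`, as a real number. -/
def Yplus {n : ℕ} (X : Fin n → ℝ) (t : ℝ) : ℝ :=
  ((Finset.univ.filter (fun i => t < X i)).card : ℝ)

/-- `ΔN(t) = #{i : X_i = t, D_i = 1}`, as a real number. -/
def dN {n : ℕ} (X : Fin n → ℝ) (D : Fin n → Bool) (t : ℝ) : ℝ :=
  ((Finset.univ.filter (fun i => X i = t ∧ D i = true)).card : ℝ)

/-- `ΔC(t) = #{i : X_i = t, D_i = 0}`, as a real number. -/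
def dC {n : ℕ} (X : Fin n → ℝ) (D : Fin n → Bool) (t : ℝ) : ℝ :=
  ((Finset.univ.filter (fun i => X i = t ∧ D i = false)).card : ℝ)

/-- `Y†(t) = Y(t) − ΔN(t)`. -/
def Ydag {n : ℕ} (X : Fin n → ℝ) (D : Fin n → Bool) (t : ℝ) : ℝ :=
  Yat X t - dN X D t

/-- `τ = max_i X_i`, the largest observation time (0 if there is no data). -/
def tau {n : ℕ} (X : Fin n → ℝ) : ℝ := WithBot.unbotD 0 ((times X).max)

/-- Censoring product-limit estimator `K̂(t) = ∏_{u ≤ t} (1 − ΔC(u)/Y†(u))`. -/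
def Khat {n : ℕ} (X : Fin n → ℝ) (D : Fin n → Bool) (t : ℝ) : ℝ :=
  ∏ u ∈ (times X).filter (fun u => u ≤ t), (1 - dC X D u / Ydag X D u)

/-- Left limit `K̂(t−) = ∏_{u < t} (1 − ΔC(u)/Y†(u))`. -/
def Kminus {n : ℕ} (X : Fin n → ℝ) (D : Fin n → Bool) (t : ℝ) : ℝ :=
  ∏ u ∈ (times X).filter (fun u => u < t), (1 - dC X D u / Ydag X D u)

/-- Failure product-limit estimator `Ŝ_PL(t) = ∏_{u ≤ t} (1 − ΔN(u)/Y(u))`. -/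
def SPL {n : ℕ} (X : Fin n → ℝ) (D : Fin n → Bool) (t : ℝ) : ℝ :=
  ∏ u ∈ (times X).filter (fun u => u ≤ t), (1 - dN X D u / Yat X u)

/-- Left limit `Ŝ_PL(t−) = ∏_{u < t} (1 − ΔN(u)/Y(u))`. -/
def SPLminus {n : ℕ} (X : Fin n → ℝ) (D : Fin n → Bool) (t : ℝ) : ℝ :=
  ∏ u ∈ (times X).filter (fun u => u < t), (1 - dN X D u / Yat X u)

/-- IPCW estimator `F̂_IPCW(t) = (1/n) ∑_i D_i 1{X_i ≤ t} / K̂(X_i−)`. -/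
def FIPCW {n : ℕ} (X : Fin n → ℝ) (D : Fin n → Bool) (t : ℝ) : ℝ :=
  (1 / (n : ℝ)) * ∑ i : Fin n,
    (if D i = true then (1 : ℝ) else 0) * (if X i ≤ t then (1 : ℝ) else 0) / Kminus X D (X i)

/-- IPCW survival estimator `S̃_IPCW(t) = (1/n) ∑_i D_i 1{X_i > t} / K̂(X_i−)`. -/
def SIPCW {n : ℕ} (X : Fin n → ℝ) (D : Fin n → Bool) (t : ℝ) : ℝ :=
  (1 / (n : ℝ)) * ∑ i : Fin n,
    (if D i = true then (1 : ℝ) else 0) * (if t < X i then (1 : ℝ) else 0) / Kminus X D (X i)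

/-- RTTR jump weight `J(v) = 1/(n · K̂(v−))`. -/
def Jw {n : ℕ} (X : Fin n → ℝ) (D : Fin n → Bool) (v : ℝ) : ℝ :=
  1 / ((n : ℝ) * Kminus X D v)

/-- Redistribute-to-the-right estimator
`Ŝ_RTTR(t) = 1 − ∑_{v ≤ t} [J(v) ΔN(v) 1{v < τ} + J(τ) Y(τ) 1{v = τ}]`. -/
def SRTTR {n : ℕ} (X : Fin n → ℝ) (D : Fin n → Bool) (t : ℝ) : ℝ :=
  1 - ∑ v ∈ (times X).filter (fun v => v ≤ t),
      (Jw X D v * dN X D v * (if v < tau X then (1 : ℝ) else 0)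
        + Jw X D (tau X) * Yat X (tau X) * (if v = tau X then (1 : ℝ) else 0))

/-
The product-limit form is turned into a sum by the ordered telescoping identity
`∏ (1 - a_u) = 1 - ∑_u a_u ∏_{v < u} (1 - a_v)`, whose `u`-th term is `K̂(u−) ΔC(u)/Y†(u)`.
Since `Y†(u) = Y(u+) + ΔC(u)`, we have `K̂(u) = K̂(u−) Y(u+)/Y†(u)`, so that term equals
`K̂(u) ΔC(u)/Y(u+)` as soon as `Y(u+) > 0`, which holds for every `u < τ`.
-/

theorem filter_le_eq_insert_filter_lt {α : Type*} [LinearOrder α] {s : Finset α} {a : α}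
    (ha : a ∈ s) : s.filter (· ≤ a) = insert a (s.filter (· < a)) := by
  ext v
  simp only [mem_filter, mem_insert, le_iff_lt_or_eq]
  constructor
  · rintro ⟨hv, hlt | rfl⟩
    exacts [Or.inr ⟨hv, hlt⟩, Or.inl rfl]
  · rintro (rfl | ⟨hv, hlt⟩)
    exacts [⟨ha, Or.inr rfl⟩, ⟨hv, Or.inl hlt⟩]

theorem Yat_eq_Yplus_add_dN_add_dC {n : ℕ} (X : Fin n → ℝ) (D : Fin n → Bool) (u : ℝ) :
    Yat X u = Yplus X u + dN X D u + dC X D u := by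
  simp only [Yat, Yplus, dN, dC, natCast_card_filter, ← sum_add_distrib]
  refine sum_congr rfl fun i _ => ?_
  rcases lt_trichotomy u (X i) with h | rfl | h
  · simp [h, h.le, h.ne']
  · cases D i <;> simp
  · simp [h.ne, not_le.2 h, not_lt.2 h.le]

theorem Ydag_eq_Yplus_add_dC {n : ℕ} (X : Fin n → ℝ) (D : Fin n → Bool) (u : ℝ) :
    Ydag X D u = Yplus X u + dC X D u := by
  rw [Ydag, Yat_eq_Yplus_add_dN_add_dC X D u]
  ring

theorem Khat_eq_Kminus_mul {n : ℕ} (X : Fin n → ℝ) (D : Fin n → Bool) {u : ℝ}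
    (hu : u ∈ times X) : Khat X D u = Kminus X D u * (1 - dC X D u / Ydag X D u) := by
  rw [Khat, Kminus, filter_le_eq_insert_filter_lt hu, prod_insert (by simp), mul_comm]

theorem tau_eq_max' {n : ℕ} (X : Fin n → ℝ) (h : (times X).Nonempty) :
    tau X = (times X).max' h := by
  rw [tau, ← coe_max' h, WithBot.unbotD_coe]

theorem Yplus_pos_of_lt_tau {n : ℕ} (hn : 0 < n) (X : Fin n → ℝ) {u : ℝ} (hu : u < tau X) :
    0 < Yplus X u := by
  have hne : (times X).Nonempty := ⟨X ⟨0, hn⟩, mem_image_of_mem X (mem_univ _)⟩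
  obtain ⟨i, -, hi⟩ := mem_image.1 ((times X).max'_mem hne)
  rw [Yplus, Nat.cast_pos, card_pos]
  exact ⟨i, mem_filter.2 ⟨mem_univ i, by rwa [hi, ← tau_eq_max']⟩⟩

theorem Kminus_mul_dC_div_Ydag {n : ℕ} (X : Fin n → ℝ) (D : Fin n → Bool) {u : ℝ}
    (hu : u ∈ times X) (hY : 0 < Yplus X u) :
    dC X D u / Ydag X D u * Kminus X D u = Khat X D u * dC X D u / Yplus X u := by
  have hYdag : Yplus X u + dC X D u ≠ 0 := (add_pos_of_pos_of_nonneg hY (Nat.cast_nonneg _)).ne'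
  rw [Khat_eq_Kminus_mul X D hu, Ydag_eq_Yplus_add_dC]
  field_simp
  ring

theorem stmt1_general (n : ℕ) (hn : 0 < n) (X : Fin n → ℝ) (D : Fin n → Bool) :
    ∀ t : ℝ, 0 < t → t < tau X →
      Khat X D t
        = 1 - ∑ u ∈ (times X).filter (fun u => u ≤ t),
            Khat X D u * dC X D u / Yplus X u := by
  intro t _ htτ
  rw [Khat, prod_one_sub_ordered]
  congr 1
  refine sum_congr rfl fun u hu => ?_
  obtain ⟨huX, hut⟩ := mem_filter.1 hu
  have hprefix : ((times X).filter (· ≤ t)).filter (· < u) = (times X).filter (· < u) := by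
    rw [filter_filter]
    exact filter_congr fun v _ => ⟨And.right, fun hvu => ⟨hvu.le.trans hut, hvu⟩⟩
  rw [hprefix, ← Kminus,
    Kminus_mul_dC_div_Ydag X D huX (Yplus_pos_of_lt_tau hn X (hut.trans_lt htτ))]

/-- `K̂` satisfies the anticipating Volterra equation
`K̂(t) = 1 − ∑_{u ≤ t} K̂(u) ΔC(u)/Y(u+)` for `0 < t < τ`. -/
theorem stmt1 (n : ℕ) (hn : 0 < n) (X : Fin n → ℝ) (D : Fin n → Bool)
    (hX : ∀ i, 0 < X i) :
    ∀ t : ℝ, 0 < t → t < tau X →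
      Khat X D t
        = 1 - ∑ u ∈ (times X).filter (fun u => u ≤ t),
            Khat X D u * dC X D u / Yplus X u :=
  stmt1_general n hn X D

end SurvStmt
end
end

section
/- Suppose that ΔN(u) · ΔC(u) = 0 for every observed time u < τ (no common discontinuities of failure and censoring before the last observation time). Then for every real t with 0 < t < τ, K̂(t) = ∏_{u ≤ t} (1 − ΔC(u)/Y(u)), and moreover K̂ satisfies the non-anticipating Volterra integral equation K̂(t) = 1 − ∑_{u ≤ t} K̂(u−) · ΔC(u)/Y(u). -/
open Finset
open scoped Classical

noncomputable section

namespace SurvStmt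

lemma filter_filter_lt_of_le {α : Type*} [LinearOrder α] (s : Finset α) {u t : α} (hut : u ≤ t) :
    {v ∈ {v ∈ s | v ≤ t} | v < u} = {v ∈ s | v < u} := by
  rw [filter_filter]
  exact filter_congr fun v _ => ⟨And.right, fun hvu => ⟨hvu.le.trans hut, hvu⟩⟩

lemma dC_div_Ydag_eq_dC_div_Yat {n : ℕ} {X : Fin n → ℝ} {D : Fin n → Bool} {u : ℝ}
    (hu : dN X D u * dC X D u = 0) : dC X D u / Ydag X D u = dC X D u / Yat X u := by
  rcases mul_eq_zero.mp hu with hN | hC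
  · rw [Ydag, hN, sub_zero]
  · rw [hC, zero_div, zero_div]

theorem stmt3_general (n : ℕ) (X : Fin n → ℝ) (D : Fin n → Bool)
    (hnc : ∀ u ∈ times X, u < tau X → dN X D u * dC X D u = 0) :
    ∀ t : ℝ, 0 < t → t < tau X →
      (Khat X D t = ∏ u ∈ (times X).filter (fun u => u ≤ t), (1 - dC X D u / Yat X u))
      ∧ (Khat X D t
          = 1 - ∑ u ∈ (times X).filter (fun u => u ≤ t),
              Kminus X D u * dC X D u / Yat X u) := by
  intro t _ htτ
  have hY : ∀ u ∈ (times X).filter (fun u => u ≤ t), dC X D u / Ydag X D u = dC X D u / Yat X u :=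
    fun u hu => dC_div_Ydag_eq_dC_div_Yat <|
      hnc u (mem_filter.mp hu).1 ((mem_filter.mp hu).2.trans_lt htτ)
  refine ⟨prod_congr rfl fun u hu => by rw [hY u hu], ?_⟩
  rw [Khat, prod_one_sub_ordered]
  congr 1
  refine sum_congr rfl fun u hu => ?_
  rw [filter_filter_lt_of_le _ (mem_filter.mp hu).2, ← Kminus, hY u hu, mul_comm, mul_div_assoc]

/-- if `ΔN(u) ΔC(u) = 0` for every observed time `u < τ`, then for `0 < t < τ`,
`K̂(t) = ∏_{u ≤ t} (1 − ΔC(u)/Y(u))` and `K̂(t) = 1 − ∑_{u ≤ t} K̂(u−) ΔC(u)/Y(u)`. -/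
theorem stmt3 (n : ℕ) (hn : 0 < n) (X : Fin n → ℝ) (D : Fin n → Bool)
    (hX : ∀ i, 0 < X i)
    (hnc : ∀ u ∈ times X, u < tau X → dN X D u * dC X D u = 0) :
    ∀ t : ℝ, 0 < t → t < tau X →
      (Khat X D t = ∏ u ∈ (times X).filter (fun u => u ≤ t), (1 - dC X D u / Yat X u))
      ∧ (Khat X D t
          = 1 - ∑ u ∈ (times X).filter (fun u => u ≤ t),
              Kminus X D u * dC X D u / Yat X u) :=
  stmt3_general n X D hnc

end SurvStmt
end
end

section
/- Any solution of Efron's self-consistency equation is positive and non-increasing before the last observation time: if Ŝ : ℝ → ℝ satisfies Ŝ(t) = Y(t+)/n + (Ŝ(t)/n) · ∑_{u ≤ t} ΔC(u)/Ŝ(u) for every t with 0 < t < τ, then Ŝ(t) > 0 for every t ∈ (0, τ), and Ŝ(s) ≥ Ŝ(t) whenever 0 < s ≤ t < τ. -/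
/-!
Write `A(t) = ∑_{u ≤ t} ΔC(u)/Ŝ(u)`; the equation says `Ŝ(t) (n - A(t)) = Y(t+)`, and `Y(t+) > 0`
before `τ`. Positivity climbs through the observed times: if `Ŝ > 0` at the previous observed time
`m`, then `A(m) < n`, while the jump of `A` at `t` contributes `Ŝ(t) · ΔC(t)/Ŝ(t) ≥ 0`, so
`Ŝ(t) (n - A(m)) > 0` forces `Ŝ(t) > 0`. For monotonicity, divide by `Ŝ`:
`Y(s+)/Ŝ(s) = Y(t+)/Ŝ(t) + ∑_{s < u ≤ t} ΔC(u)/Ŝ(u)`. If `Ŝ(t) ≤ Ŝ(u)` at the observed `u ∈ (s, t]`,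
the right side is at most `(Y(t+) + #{censored in (s, t]})/Ŝ(t) ≤ Y(s+)/Ŝ(t)`, whence
`Ŝ(t) ≤ Ŝ(s)`; a downward induction over the observed times supplies that hypothesis.
-/

open Finset
open scoped Classical

noncomputable section

namespace Finset

variable {α β : Type*} [LinearOrder α] [AddCommMonoid β]

theorem sum_filter_le_eq_sum_filter_lt_add (s : Finset α) (f : α → β) (a : α) :
    ∑ x ∈ s.filter (fun x => x ≤ a), f x
      = ∑ x ∈ s.filter (fun x => x < a), f x + ∑ x ∈ s.filter (fun x => x = a), f x := by
  rw [← sum_union (disjoint_filter.mpr fun x _ hlt heq => hlt.ne heq)]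
  congr 1
  ext x
  simp only [mem_filter, mem_union, le_iff_lt_or_eq, and_or_left]

theorem sum_filter_le_eq_add_sum_filter_Ioc (s : Finset α) (f : α → β) {a b : α} (hab : a ≤ b) :
    ∑ x ∈ s.filter (fun x => x ≤ b), f x
      = ∑ x ∈ s.filter (fun x => x ≤ a), f x
        + ∑ x ∈ s.filter (fun x => a < x ∧ x ≤ b), f x := by
  rw [← sum_union (disjoint_filter.mpr fun x _ hxa h => (not_lt.mpr hxa) h.1)]
  congr 1
  ext x
  simp only [mem_filter, mem_union]
  constructor
  · rintro ⟨hx, hxb⟩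
    exact (le_or_gt x a).imp (fun h => ⟨hx, h⟩) fun h => ⟨hx, h, hxb⟩
  · rintro (⟨hx, hxa⟩ | ⟨hx, -, hxb⟩)
    exacts [⟨hx, hxa.trans hab⟩, ⟨hx, hxb⟩]

end Finset

namespace SurvStmt

variable {n : ℕ} {X : Fin n → ℝ} {D : Fin n → Bool} {s t : ℝ}

theorem tau_mem_times (h : tau X ≠ 0) : tau X ∈ times X := by
  unfold tau at *
  cases hmax : (times X).max with
  | bot => simp [hmax] at h
  | coe m => simpa [hmax] using mem_of_max hmax

theorem mem_times_pos (hX : ∀ i, 0 < X i) {u : ℝ} (hu : u ∈ times X) : 0 < u := by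
  obtain ⟨i, -, rfl⟩ := mem_image.mp hu
  exact hX i

theorem Yplus_pos (ht0 : 0 < t) (ht : t < tau X) : 0 < Yplus X t := by
  obtain ⟨i, -, hi⟩ := mem_image.mp (tau_mem_times (ht0.trans ht).ne')
  unfold Yplus
  exact_mod_cast card_pos.mpr ⟨i, by simp [hi, ht]⟩

theorem Yplus_le_card (t : ℝ) : Yplus X t ≤ n := by
  unfold Yplus
  exact_mod_cast (card_filter_le _ _).trans (card_univ.trans (Fintype.card_fin n)).le

theorem sum_dC_eq_card (F : Finset ℝ) :
    ∑ u ∈ F, dC X D u = (univ.filter (fun i => X i ∈ F ∧ D i = false)).card := by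
  rw [card_eq_sum_card_fiberwise (f := X) (t := F) fun i hi => (mem_filter.mp hi).2.1]
  push_cast
  refine sum_congr rfl fun u hu => ?_
  unfold dC
  congr 2
  ext i
  simp only [mem_filter, mem_univ, true_and]
  constructor
  · rintro ⟨rfl, hD⟩
    exact ⟨⟨hu, hD⟩, rfl⟩
  · rintro ⟨⟨-, hD⟩, rfl⟩
    exact ⟨rfl, hD⟩

theorem Yplus_add_sum_dC_le (hst : s ≤ t) :
    Yplus X t + ∑ u ∈ (times X).filter (fun u => s < u ∧ u ≤ t), dC X D u ≤ Yplus X s := by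
  rw [sum_dC_eq_card]
  unfold Yplus
  have hdisj : Disjoint (univ.filter fun i => t < X i)
      (univ.filter fun i => X i ∈ (times X).filter (fun u => s < u ∧ u ≤ t) ∧ D i = false) :=
    disjoint_filter.mpr fun i _ hti hi => (not_lt.mpr (mem_filter.mp hi.1).2.2) hti
  have hsub : (univ.filter fun i => t < X i)
      ∪ (univ.filter fun i => X i ∈ (times X).filter (fun u => s < u ∧ u ≤ t) ∧ D i = false)
      ⊆ univ.filter fun i => s < X i := by
    intro i hi
    simp only [mem_union, mem_filter, mem_univ, true_and] at hi ⊢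
    exact hi.elim (hst.trans_lt ·) fun h => h.1.2.1
  exact_mod_cast (card_union_of_disjoint hdisj).symm.trans_le (card_le_card hsub)

def censoredSum (X : Fin n → ℝ) (D : Fin n → Bool) (S : ℝ → ℝ) (t : ℝ) : ℝ :=
  ∑ u ∈ (times X).filter (fun u => u ≤ t), dC X D u / S u

def SelfConsistent (X : Fin n → ℝ) (D : Fin n → Bool) (S : ℝ → ℝ) : Prop :=
  ∀ t : ℝ, 0 < t → t < tau X → S t = Yplus X t / n + (S t / n) * censoredSum X D S t

namespace SelfConsistent

variable {S : ℝ → ℝ}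

theorem mul_sub_censoredSum (hS : SelfConsistent X D S) (ht0 : 0 < t) (ht : t < tau X) :
    S t * (n - censoredSum X D S t) = Yplus X t := by
  have hn : (n : ℝ) ≠ 0 := ((Yplus_pos ht0 ht).trans_le (Yplus_le_card t)).ne'
  have h := hS t ht0 ht
  field_simp at h
  linear_combination h

theorem censoredSum_lt (hS : SelfConsistent X D S) (ht0 : 0 < t) (ht : t < tau X)
    (hSt : 0 < S t) : censoredSum X D S t < n := by
  have h := (hS.mul_sub_censoredSum ht0 ht).symm ▸ Yplus_pos ht0 ht
  linarith [pos_of_mul_pos_right h hSt.le]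

theorem pos_of_forall_lt (hS : SelfConsistent X D S) (hX : ∀ i, 0 < X i) (ht0 : 0 < t)
    (ht : t < tau X) (hbefore : ∀ u ∈ times X, u < t → 0 < S u) : 0 < S t := by
  have hprev : ∑ u ∈ (times X).filter (fun u => u < t), dC X D u / S u < n := by
    by_cases hne : ((times X).filter (fun u => u < t)).Nonempty
    · set m := ((times X).filter (fun u => u < t)).max' hne
      obtain ⟨hm, hmt⟩ := mem_filter.mp (max'_mem _ hne)
      have hfilter : (times X).filter (fun u => u < t) = (times X).filter (fun u => u ≤ m) := by
        ext u
        simp only [mem_filter, and_congr_right_iff]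
        exact fun hu => ⟨fun hut => le_max' _ u (mem_filter.mpr ⟨hu, hut⟩), (·.trans_lt hmt)⟩
      rw [hfilter]
      exact hS.censoredSum_lt (mem_times_pos hX hm) (hmt.trans ht) (hbefore m hm hmt)
    · rw [not_nonempty_iff_eq_empty.mp hne, sum_empty]
      exact (Yplus_pos ht0 ht).trans_le (Yplus_le_card t)
  have hjump : 0 ≤ S t * ∑ u ∈ (times X).filter (fun u => u = t), dC X D u / S u := by
    rw [mul_sum]
    refine sum_nonneg fun u hu => ?_
    rw [(mem_filter.mp hu).2]
    rcases eq_or_ne (S t) 0 with h0 | h0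
    · simp [h0]
    · exact (mul_div_cancel₀ _ h0).symm ▸ Nat.cast_nonneg _
  have h := hS.mul_sub_censoredSum ht0 ht
  rw [censoredSum, sum_filter_le_eq_sum_filter_lt_add] at h
  refine pos_of_mul_pos_left (b := n - ∑ u ∈ (times X).filter (fun u => u < t), dC X D u / S u)
    ?_ (by linarith)
  linarith [Yplus_pos ht0 ht]

theorem pos (hS : SelfConsistent X D S) (hX : ∀ i, 0 < X i) :
    ∀ t ∈ Set.Ioo 0 (tau X), 0 < S t := by
  have hobserved : ∀ u ∈ times X, u < tau X → 0 < S u := fun u hu =>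
    ((times X).finite_toSet.wellFoundedOn (r := (· < ·))).induction hu
      (P := fun u => u < tau X → 0 < S u) fun v hv ih hvτ =>
        hS.pos_of_forall_lt hX (mem_times_pos hX hv) hvτ
          fun w hw hwv => ih w hw hwv (hwv.trans hvτ)
  exact fun t ⟨ht0, ht⟩ => hS.pos_of_forall_lt hX ht0 ht
    fun u hu hut => hobserved u hu (hut.trans ht)

theorem le_of_forall_mem_times_Ioc (hS : SelfConsistent X D S)
    (hpos : ∀ t ∈ Set.Ioo 0 (tau X), 0 < S t) (hs0 : 0 < s) (hst : s < t) (ht : t < tau X)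
    (hmid : ∀ u ∈ times X, s < u → u ≤ t → S t ≤ S u) : S t ≤ S s := by
  have hSs := hpos s ⟨hs0, hst.trans ht⟩
  have hSt := hpos t ⟨hs0.trans hst, ht⟩
  have hs := hS.mul_sub_censoredSum hs0 (hst.trans ht)
  have ht' := hS.mul_sub_censoredSum (hs0.trans hst) ht
  set M := (times X).filter (fun u => s < u ∧ u ≤ t)
  have hsplit : censoredSum X D S t = censoredSum X D S s + ∑ u ∈ M, dC X D u / S u :=
    sum_filter_le_eq_add_sum_filter_Ioc _ _ hst.le
  have hjumps : ∑ u ∈ M, dC X D u / S u ≤ (∑ u ∈ M, dC X D u) / S t := by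
    rw [sum_div]
    refine sum_le_sum fun u hu => ?_
    obtain ⟨hu, hsu, hut⟩ := mem_filter.mp hu
    exact div_le_div_of_nonneg_left (Nat.cast_nonneg _) hSt (hmid u hu hsu hut)
  have hcount := Yplus_add_sum_dC_le (X := X) (D := D) hst.le
  have hinv : Yplus X s / S s ≤ Yplus X s / S t := calc
    Yplus X s / S s = n - censoredSum X D S s := by rw [← hs]; field_simp
    _ = Yplus X t / S t + ∑ u ∈ M, dC X D u / S u := by rw [← ht', hsplit]; field_simp; ring
    _ ≤ (Yplus X t + ∑ u ∈ M, dC X D u) / S t := by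
      rw [add_div]; exact add_le_add_right hjumps _
    _ ≤ Yplus X s / S t := div_le_div_of_nonneg_right hcount hSt.le
  exact (div_le_div_iff_of_pos_left (Yplus_pos hs0 (hst.trans ht)) hSs hSt).mp hinv

theorem le_of_mem_times (hS : SelfConsistent X D S) (hX : ∀ i, 0 < X i)
    (hpos : ∀ t ∈ Set.Ioo 0 (tau X), 0 < S t) (ht : t < tau X) :
    ∀ u ∈ times X, u ≤ t → S t ≤ S u := fun u hu =>
  ((times X).finite_toSet.wellFoundedOn (r := (· > ·))).induction hu
    (P := fun u => u ≤ t → S t ≤ S u) fun v hv ih hvt => by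
      rcases hvt.eq_or_lt with rfl | hvt
      · rfl
      exact hS.le_of_forall_mem_times_Ioc hpos (mem_times_pos hX hv) hvt ht
        fun w hw hvw hwt => ih w hw hvw hwt

theorem antitoneOn (hS : SelfConsistent X D S) (hX : ∀ i, 0 < X i) :
    AntitoneOn S (Set.Ioo 0 (tau X)) := by
  rintro s ⟨hs0, -⟩ t ⟨-, ht⟩ hst
  have hpos := hS.pos hX
  rcases hst.eq_or_lt with rfl | hst
  · rfl
  exact hS.le_of_forall_mem_times_Ioc hpos hs0 hst ht
    fun u hu _ hut => hS.le_of_mem_times hX hpos ht u hu hut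

end SelfConsistent

theorem stmt7_general (n : ℕ) (X : Fin n → ℝ) (D : Fin n → Bool)
    (hX : ∀ i, 0 < X i) (S : ℝ → ℝ)
    (hS : ∀ t : ℝ, 0 < t → t < tau X →
      S t = Yplus X t / (n : ℝ)
        + (S t / (n : ℝ))
          * ∑ u ∈ (times X).filter (fun u => u ≤ t), dC X D u / S u) :
    (∀ t : ℝ, 0 < t → t < tau X → 0 < S t)
    ∧ (∀ s t : ℝ, 0 < s → s ≤ t → t < tau X → S t ≤ S s) := by
  have hS : SelfConsistent X D S := hS
  exact ⟨fun t ht0 ht => hS.pos hX t ⟨ht0, ht⟩,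
    fun s t hs hst ht => hS.antitoneOn hX ⟨hs, hst.trans_lt ht⟩ ⟨hs.trans_le hst, ht⟩ hst⟩

/-- any solution of Efron's self-consistency equation is positive and
non-increasing on `(0, τ)`. -/
theorem stmt7 (n : ℕ) (hn : 0 < n) (X : Fin n → ℝ) (D : Fin n → Bool)
    (hX : ∀ i, 0 < X i) (S : ℝ → ℝ)
    (hS : ∀ t : ℝ, 0 < t → t < tau X →
      S t = Yplus X t / (n : ℝ)
        + (S t / (n : ℝ))
          * ∑ u ∈ (times X).filter (fun u => u ≤ t), dC X D u / S u) :
    (∀ t : ℝ, 0 < t → t < tau X → 0 < S t)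
    ∧ (∀ s t : ℝ, 0 < s → s ≤ t → t < tau X → S t ≤ S s) :=
  stmt7_general n X D hX S hS

end SurvStmt
end
end

section
/- The failure product-limit estimator satisfies the non-anticipating Volterra integral equation: for every real t > 0, Ŝ_PL(t) = 1 − ∑_{u ≤ t} Ŝ_PL(u−) · ΔN(u)/Y(u). -/
/-! Splitting off the largest time in a finite product gives, by induction, the telescoping
identity `∏ g = 1 - ∑_u (∏_{v < u} g v) (1 - g u)`. Applied to the factors
`g u = 1 - ΔN(u)/Y(u)` of `Ŝ_PL`, the `u`-th term is `Ŝ_PL(u−) ΔN(u)/Y(u)`. -/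

open Finset
open scoped Classical

noncomputable section

namespace Finset

theorem prod_eq_one_sub_sum_prod_lt_mul_one_sub {α R : Type*} [LinearOrder α] [CommRing R]
    (s : Finset α) (g : α → R) :
    ∏ u ∈ s, g u = 1 - ∑ u ∈ s, (∏ v ∈ s.filter (· < u), g v) * (1 - g u) := by
  induction s using Finset.induction_on_max with
  | empty => simp
  | insert a s hlt ih =>
    have ha : a ∉ s := fun h => lt_irrefl a (hlt a h)
    have hfilter_a : (insert a s).filter (· < a) = s := by
      rw [filter_insert, if_neg (lt_irrefl a), filter_true_of_mem hlt]
    have hfilter_s : ∀ u ∈ s, (insert a s).filter (· < u) = s.filter (· < u) := fun u hu => by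
      rw [filter_insert, if_neg (hlt u hu).not_gt]
    rw [prod_insert ha, sum_insert ha, hfilter_a,
      sum_congr rfl fun u hu => by rw [hfilter_s u hu], ih]
    ring

theorem filter_filter_le_filter_lt {α : Type*} [LinearOrder α] (T : Finset α)
    {u t : α} (hut : u ≤ t) :
    (T.filter (· ≤ t)).filter (· < u) = T.filter (· < u) := by
  rw [filter_filter]
  exact filter_congr fun v _ => ⟨And.right, fun hv => ⟨(hv.trans_le hut).le, hv⟩⟩

theorem prod_filter_le_eq_one_sub_sum {α R : Type*} [LinearOrder α] [CommRing R]
    (T : Finset α) (g : α → R) (t : α) :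
    ∏ u ∈ T.filter (· ≤ t), g u
      = 1 - ∑ u ∈ T.filter (· ≤ t), (∏ v ∈ T.filter (· < u), g v) * (1 - g u) := by
  rw [prod_eq_one_sub_sum_prod_lt_mul_one_sub]
  congr 1
  refine sum_congr rfl fun u hu => ?_
  rw [filter_filter_le_filter_lt T (mem_filter.mp hu).2]

end Finset

namespace SurvStmt

theorem stmt9_general (n : ℕ) (X : Fin n → ℝ) (D : Fin n → Bool) :
    ∀ t : ℝ, 0 < t →
      SPL X D t
        = 1 - ∑ u ∈ (times X).filter (fun u => u ≤ t),
            SPLminus X D u * dN X D u / Yat X u := by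
  intro t _
  rw [SPL, Finset.prod_filter_le_eq_one_sub_sum]
  simp only [SPLminus, sub_sub_cancel, mul_div_assoc]

/-- the failure product-limit estimator satisfies the non-anticipating
Volterra equation: for every `t > 0`,
`Ŝ_PL(t) = 1 − ∑_{u ≤ t} Ŝ_PL(u−) ΔN(u)/Y(u)`. -/
theorem stmt9 (n : ℕ) (hn : 0 < n) (X : Fin n → ℝ) (D : Fin n → Bool)
    (hX : ∀ i, 0 < X i) :
    ∀ t : ℝ, 0 < t →
      SPL X D t
        = 1 - ∑ u ∈ (times X).filter (fun u => u ≤ t),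
            SPLminus X D u * dN X D u / Yat X u :=
  stmt9_general n X D

end SurvStmt
end
end
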